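/- Let n ≥ 3. Let U be the n×n matrix whose only nonzero entries are U_{i,1} = (S_{n−2}p)_{i−1} and U_{i,n} = (S_{n−2}Jp)_{i−1} for 2 ≤ i ≤ n−1. Then U² = 0, T_n = Ŝ_n(I + U), and T_n^{−1} = (I − U)Ŝ_n, where T_n is the n×n matrix with block form [[1,0,0],[p, S_{n−2}, Jp],[0,0,1]] and T_n^{−1} is its inverse. -/

import Mathlib

open Matrix

/-- The sine transform matrix of type I: `(S_m)_{ij} = sqrt(2/(m+1))·sin(ijπ/(m+1))`
for `1 ≤ i,j ≤ m` (indexed here by `Fin m`, i.e. with indices shifted by one). -/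
noncomputable def sineMat (m : ℕ) : Matrix (Fin m) (Fin m) ℝ :=
  Matrix.of fun i j =>
    Real.sqrt (2 / (m + 1)) *
      Real.sin ((((i : ℕ) : ℝ) + 1) * (((j : ℕ) : ℝ) + 1) * Real.pi / (m + 1))

/-- `Ŝ_n = diag(1, S_{n-2}, 1)`: the `n×n` block-diagonal matrix with `(1,1)` entry `1`,
central block the sine transform matrix `S_{n-2}`, and `(n,n)` entry `1`. -/
noncomputable def Shat (n : ℕ) : Matrix (Fin n) (Fin n) ℝ :=
  Matrix.of fun i j =>
    if (i : ℕ) = 0 ∧ (j : ℕ) = 0 then 1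
    else if (i : ℕ) = n - 1 ∧ (j : ℕ) = n - 1 then 1
    else if h : 0 < (i : ℕ) ∧ (i : ℕ) < n - 1 ∧ 0 < (j : ℕ) ∧ (j : ℕ) < n - 1 then
      sineMat (n - 2) ⟨(i : ℕ) - 1, by omega⟩ ⟨(j : ℕ) - 1, by omega⟩
    else 0

/-- The vector `p ∈ ℝ^{n-2}` with `p_j = 1 - j/(n-1)` for `j = 1,…,n-2` (1-based). -/
noncomputable def pvec (n : ℕ) : Fin (n - 2) → ℝ := fun j => 1 - (((j : ℕ) : ℝ) + 1) / ((n : ℝ) - 1)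

/-- The `m×m` flip (anti-identity) matrix, `J_{ij} = 1` iff `i+j = m+1` (1-based). -/
def flipMat (m : ℕ) : Matrix (Fin m) (Fin m) ℝ :=
  Matrix.of fun i j => if (i : ℕ) + (j : ℕ) = m - 1 then 1 else 0

/-- The `n×n` matrix with block form `[[1,0,0],[x, M, y],[0,0,1]]`: first column `(1,x,0)ᵀ`,
last column `(0,y,1)ᵀ`, central `(n-2)×(n-2)` block `M`, zeros elsewhere in the first
and last rows. -/
noncomputable def blockT (n : ℕ) (x y : Fin (n - 2) → ℝ)
    (M : Matrix (Fin (n - 2)) (Fin (n - 2)) ℝ) : Matrix (Fin n) (Fin n) ℝ :=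
  Matrix.of fun i j =>
    if (i : ℕ) = 0 then (if (j : ℕ) = 0 then 1 else 0)
    else if (i : ℕ) = n - 1 then (if (j : ℕ) = n - 1 then 1 else 0)
    else if h : 0 < (i : ℕ) ∧ (i : ℕ) < n - 1 then
      if (j : ℕ) = 0 then x ⟨(i : ℕ) - 1, by omega⟩
      else if (j : ℕ) = n - 1 then y ⟨(i : ℕ) - 1, by omega⟩
      else if h2 : 0 < (j : ℕ) ∧ (j : ℕ) < n - 1 then
        M ⟨(i : ℕ) - 1, by omega⟩ ⟨(j : ℕ) - 1, by omega⟩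
      else 0
    else 0

/-- The anti-reflective transform `T_n = [[1,0,0],[p, S_{n-2}, Jp],[0,0,1]]`. -/
noncomputable def Tmat (n : ℕ) : Matrix (Fin n) (Fin n) ℝ :=
  blockT n (pvec n) ((flipMat (n - 2)).mulVec (pvec n)) (sineMat (n - 2))

/-- The matrix `[[1,0,0],[-S_{n-2}p, S_{n-2}, -S_{n-2}Jp],[0,0,1]]` (the inverse of `T_n`). -/
noncomputable def TinvMat (n : ℕ) : Matrix (Fin n) (Fin n) ℝ :=
  blockT n (fun i => -((sineMat (n - 2)).mulVec (pvec n) i))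
    (fun i => -((sineMat (n - 2)).mulVec ((flipMat (n - 2)).mulVec (pvec n)) i))
    (sineMat (n - 2))

/-- The `n×n` matrix `U` whose only nonzero entries are `U_{i,1} = (S_{n-2}p)_{i-1}` and
`U_{i,n} = (S_{n-2}Jp)_{i-1}` for `2 ≤ i ≤ n-1` (1-based). -/
noncomputable def Umat (n : ℕ) : Matrix (Fin n) (Fin n) ℝ :=
  Matrix.of fun i j =>
    if h : 0 < (i : ℕ) ∧ (i : ℕ) < n - 1 then
      if (j : ℕ) = 0 then (sineMat (n - 2)).mulVec (pvec n) ⟨(i : ℕ) - 1, by omega⟩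
      else if (j : ℕ) = n - 1 then
        (sineMat (n - 2)).mulVec ((flipMat (n - 2)).mulVec (pvec n)) ⟨(i : ℕ) - 1, by omega⟩
      else 0
    else 0


lemma aux_cos_sum (m : ℕ) (c : ℤ) (hc : c ≠ 0) (hcm : c.natAbs < 2*(m+1)) :
    ∑ k ∈ Finset.range (m+1), Real.cos (c * k * Real.pi / (m+1)) =
      if Even c then 0 else 1 := by
  have hm1 : ((m:ℝ)+1) ≠ 0 := by positivity
  have hm1c : ((m:ℂ)+1) ≠ 0 := by
    intro h
    have : ((m:ℝ)+1) = 0 := by exact_mod_cast h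
    exact hm1 this
  obtain ⟨φ, hφ⟩ : ∃ φ : ℝ, φ = c * Real.pi / (m+1) := ⟨_, rfl⟩
  obtain ⟨w, hw⟩ : ∃ w : ℂ, w = Complex.exp (φ * Complex.I) := ⟨_, rfl⟩
  have hwk : ∀ k : ℕ, w ^ k = Complex.exp ((c * k * Real.pi / (m+1) : ℝ) * Complex.I) := by
    intro k
    rw [hw, ← Complex.exp_nat_mul]
    congr 1
    rw [hφ]
    push_cast
    field_simp
  have hconjw : w * (starRingEnd ℂ) w = 1 := by
    rw [Complex.mul_conj, Complex.normSq_eq_norm_sq, hw, Complex.norm_exp_ofReal_mul_I]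
    norm_num
  have hw1 : w ≠ 1 := by
    intro h
    rw [hw, Complex.exp_eq_one_iff] at h
    obtain ⟨k, hk⟩ := h
    have hk' : (↑φ : ℂ) * Complex.I = (↑k * (2*Real.pi)) * Complex.I := by rw [hk]; ring
    have h2 : (↑φ : ℂ) = ↑k * (2*Real.pi) := mul_right_cancel₀ Complex.I_ne_zero hk'
    have h3 : φ = k * (2*Real.pi) := by exact_mod_cast h2
    rw [hφ] at h3
    have hπ := Real.pi_ne_zero
    have h3' : (c:ℝ) * Real.pi = (k * (2*Real.pi)) * ((m:ℝ)+1) := by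
      field_simp at h3
      linear_combination Real.pi * h3
    have h4' : (c:ℝ) * Real.pi = ((2*k*(m+1):ℤ):ℝ) * Real.pi := by
      push_cast
      linear_combination h3'
    have h4 : (c:ℝ) = ((2*k*(m+1):ℤ):ℝ) := mul_right_cancel₀ hπ h4'
    have h5 : c = 2*k*(m+1) := by exact_mod_cast h4
    have hk0 : k ≠ 0 := by rintro rfl; simp at h5; exact hc h5
    have h6 : 1 ≤ k.natAbs := Int.natAbs_pos.mpr hk0
    have h7 : c.natAbs = 2 * k.natAbs * (m+1) := by
      rw [h5, show ((m:ℤ)+1) = ((m+1:ℕ):ℤ) by push_cast; ring, Int.natAbs_mul, Int.natAbs_mul,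
        Int.natAbs_natCast]
      norm_num
    nlinarith [hcm, h6, h7]
  have hwm : w ^ (m+1) = (-1 : ℂ) ^ c := by
    rw [hw, ← Complex.exp_nat_mul]
    rw [show ((m+1 : ℕ) : ℂ) * (↑φ * Complex.I) = ↑c * (↑Real.pi * Complex.I) by
      rw [hφ]; push_cast; field_simp]
    rw [Complex.exp_int_mul, Complex.exp_pi_mul_I]
  have hre : ∑ k ∈ Finset.range (m+1), Real.cos (c * k * Real.pi / (m+1)) =
      (∑ k ∈ Finset.range (m+1), w ^ k).re := by
    rw [Complex.re_sum]
    refine Finset.sum_congr rfl fun k _ => ?_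
    rw [hwk k, Complex.exp_ofReal_mul_I_re]
  rw [hre, geom_sum_eq hw1, hwm]
  rcases Int.even_or_odd c with he | ho
  · rw [he.neg_one_zpow, if_pos he]
    simp
  · rw [ho.neg_one_zpow, if_neg (by simpa using ho)]
    set z : ℂ := (-1 - 1) / (w - 1) with hz
    have hcw1 : (starRingEnd ℂ) w ≠ 1 := by
      intro h
      apply hw1
      have := congrArg (starRingEnd ℂ) h
      simpa using this
    have h1 : w - 1 ≠ 0 := sub_ne_zero.mpr hw1
    have h2 : (starRingEnd ℂ) w - 1 ≠ 0 := sub_ne_zero.mpr hcw1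
    have key : z + (starRingEnd ℂ) z = 2 := by
      rw [hz, map_div₀]
      simp only [map_sub, map_neg, _root_.map_one]
      rw [div_add_div _ _ h1 h2, div_eq_iff (mul_ne_zero h1 h2)]
      linear_combination (-2:ℂ) * hconjw
    have h3 : ((2 * z.re : ℝ) : ℂ) = 2 := by rw [← Complex.add_conj]; exact key
    have h4 : 2 * z.re = 2 := by exact_mod_cast h3
    linarith

lemma aux_sin_sum (m a b : ℕ) (ha : 1 ≤ a) (ha' : a ≤ m) (hb : 1 ≤ b) (hb' : b ≤ m) :
    ∑ k ∈ Finset.range m,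
        Real.sin (a * (k+1) * Real.pi / (m+1)) * Real.sin (b * (k+1) * Real.pi / (m+1)) =
      if a = b then ((m:ℝ)+1)/2 else 0 := by
  have hshift : ∀ c : ℤ, ∑ k ∈ Finset.range m, Real.cos (c * (k+1) * Real.pi / (m+1)) =
      (∑ k ∈ Finset.range (m+1), Real.cos (c * k * Real.pi / (m+1))) - 1 := by
    intro c
    rw [Finset.sum_range_succ' (fun k => Real.cos (c * k * Real.pi / (m+1))) m]
    push_cast
    simp
  have hterm : ∀ k : ℕ, Real.sin (a * (k+1) * Real.pi / (m+1)) * Real.sin (b * (k+1) * Real.pi / (m+1))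
      = (Real.cos ((((a:ℤ) - b : ℤ) : ℝ) * (k+1) * Real.pi / (m+1))
          - Real.cos ((((a:ℤ) + b : ℤ) : ℝ) * (k+1) * Real.pi / (m+1))) / 2 := by
    intro k
    rw [show ((((a:ℤ) - b : ℤ) : ℝ) * (k+1) * Real.pi / (m+1))
        = (a * (k+1) * Real.pi / (m+1)) - (b * (k+1) * Real.pi / (m+1)) by push_cast; ring]
    rw [show ((((a:ℤ) + b : ℤ) : ℝ) * (k+1) * Real.pi / (m+1))
        = (a * (k+1) * Real.pi / (m+1)) + (b * (k+1) * Real.pi / (m+1)) by push_cast; ring]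
    rw [Real.cos_sub, Real.cos_add]
    ring
  rw [Finset.sum_congr rfl (fun k _ => hterm k), ← Finset.sum_div, Finset.sum_sub_distrib,
    hshift ((a:ℤ) - b), hshift ((a:ℤ) + b)]
  have hab2 : (((a:ℤ) + b)).natAbs < 2*(m+1) := by omega
  have habne : ((a:ℤ) + b) ≠ 0 := by omega
  by_cases hab : a = b
  · subst hab
    rw [if_pos rfl]
    rw [aux_cos_sum m ((a:ℤ) + a) habne hab2, if_pos ⟨(a:ℤ), rfl⟩]
    have : ∑ k ∈ Finset.range (m+1), Real.cos ((((a:ℤ) - a : ℤ) : ℝ) * k * Real.pi / (m+1))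
        = (m+1 : ℝ) := by
      rw [show ((a:ℤ) - a) = 0 by ring]
      simp
    rw [this]
    ring
  · rw [if_neg hab]
    have h1 : ((a:ℤ) - b) ≠ 0 := by omega
    have h1' : (((a:ℤ) - b)).natAbs < 2*(m+1) := by omega
    rw [aux_cos_sum m _ h1 h1', aux_cos_sum m _ habne hab2]
    have : (Even ((a:ℤ) - b)) ↔ (Even ((a:ℤ) + b)) := by
      rw [Int.even_sub, Int.even_add]
    by_cases he : Even ((a:ℤ) - b)
    · rw [if_pos he, if_pos (this.mp he)]; ring
    · rw [if_neg he, if_neg (fun h => he (this.mpr h))]; ring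
lemma sineMat_mul_self (m : ℕ) : sineMat m * sineMat m = 1 := by
  ext i j
  rw [Matrix.mul_apply]
  have hq : Real.sqrt (2/((m:ℝ)+1)) * Real.sqrt (2/((m:ℝ)+1)) = 2/((m:ℝ)+1) :=
    Real.mul_self_sqrt (by positivity)
  have entry : ∀ k : Fin m, sineMat m i k * sineMat m k j =
      2/((m:ℝ)+1) * (Real.sin ((((i:ℕ)+1 : ℕ) : ℝ) * (((k:ℕ):ℝ)+1) * Real.pi/(m+1)) *
        Real.sin ((((j:ℕ)+1 : ℕ) : ℝ) * (((k:ℕ):ℝ)+1) * Real.pi/(m+1))) := by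
    intro k
    simp only [sineMat, Matrix.of_apply]
    rw [show (((i:ℕ):ℝ) + 1) * (((k:ℕ):ℝ) + 1) * Real.pi / (m+1)
        = (((i:ℕ)+1 : ℕ) : ℝ) * (((k:ℕ):ℝ)+1) * Real.pi/(m+1) by push_cast; ring]
    rw [show (((k:ℕ):ℝ) + 1) * (((j:ℕ):ℝ) + 1) * Real.pi / (m+1)
        = (((j:ℕ)+1 : ℕ) : ℝ) * (((k:ℕ):ℝ)+1) * Real.pi/(m+1) by push_cast; ring]
    rw [mul_mul_mul_comm, hq]
  rw [Finset.sum_congr rfl (fun k _ => entry k)]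
  rw [Fin.sum_univ_eq_sum_range (fun k => 2/((m:ℝ)+1) *
      (Real.sin ((((i:ℕ)+1 : ℕ) : ℝ) * ((k:ℝ)+1) * Real.pi/(m+1)) *
        Real.sin ((((j:ℕ)+1 : ℕ) : ℝ) * ((k:ℝ)+1) * Real.pi/(m+1)))) m]
  rw [← Finset.mul_sum]
  rw [aux_sin_sum m ((i:ℕ)+1) ((j:ℕ)+1) (by omega) (by omega) (by omega) (by omega)]
  rw [Matrix.one_apply]
  have : ((i:ℕ)+1 = (j:ℕ)+1) ↔ (i = j) := by rw [Fin.ext_iff]; omega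
  split_ifs with h1 h2 h2
  · field_simp
  · exact absurd (this.mp h1) h2
  · exact absurd (this.mpr h2) h1
  · exact mul_zero _


lemma sum_split {n : ℕ} (hn : 3 ≤ n) (f : Fin n → ℝ) :
    ∑ k, f k = f ⟨0, by omega⟩ + (∑ k : Fin (n-2), f ⟨(k:ℕ)+1, by omega⟩) + f ⟨n-1, by omega⟩ := by
  obtain ⟨m, rfl⟩ : ∃ m, n = m + 3 := ⟨n - 3, by omega⟩
  obtain ⟨g, hg⟩ : ∃ g : ℕ → ℝ, g = fun k => if h : k < m+3 then f ⟨k, h⟩ else 0 := ⟨_, rfl⟩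
  have hgk : ∀ (k : ℕ) (h : k < m+3), g k = f ⟨k, h⟩ := by
    intro k h
    rw [hg]
    exact dif_pos h
  calc ∑ k : Fin (m+3), f k
      = ∑ k ∈ Finset.range (m+3), g k := by
        rw [← Fin.sum_univ_eq_sum_range g (m+3)]
        exact Finset.sum_congr rfl fun k _ => by rw [hgk ↑k k.isLt]
    _ = (∑ k ∈ Finset.range (m+1), g (k+1) + g 0) + g (m+2) := by
        rw [show m + 3 = (m + 2) + 1 from rfl, Finset.sum_range_succ,
          show m + 2 = (m + 1) + 1 from rfl, Finset.sum_range_succ']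
    _ = f ⟨0, by omega⟩ + (∑ k : Fin (m+1), f ⟨(k:ℕ)+1, by omega⟩) + f ⟨m+2, by omega⟩ := by
        rw [hgk 0 (by omega), hgk (m+2) (by omega)]
        have hmid : ∑ k ∈ Finset.range (m+1), g (k+1)
            = ∑ k : Fin (m+1), f ⟨(k:ℕ)+1, by omega⟩ := by
          rw [← Fin.sum_univ_eq_sum_range (fun k => g (k+1)) (m+1)]
          exact Finset.sum_congr rfl fun k _ => hgk _ (by omega)
        rw [hmid]
        ring

section entries
variable {n : ℕ} (hn : 3 ≤ n)
include hn

lemma Shat_e1 (i j : Fin n) (h : (i:ℕ) = 0) :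
    Shat n i j = if (j:ℕ) = 0 then 1 else 0 := by
  simp only [Shat, Matrix.of_apply]
  split_ifs <;> first | rfl | omega | (exfalso; omega)

lemma Shat_e2 (i j : Fin n) (h : (i:ℕ) = n-1) :
    Shat n i j = if (j:ℕ) = n-1 then 1 else 0 := by
  simp only [Shat, Matrix.of_apply]
  split_ifs <;> first | rfl | omega | (exfalso; omega)

lemma Shat_c1 (i j : Fin n) (h : (j:ℕ) = 0) :
    Shat n i j = if (i:ℕ) = 0 then 1 else 0 := by
  simp only [Shat, Matrix.of_apply]
  split_ifs <;> first | rfl | omega | (exfalso; omega)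

lemma Shat_c2 (i j : Fin n) (h : (j:ℕ) = n-1) :
    Shat n i j = if (i:ℕ) = n-1 then 1 else 0 := by
  simp only [Shat, Matrix.of_apply]
  split_ifs <;> first | rfl | omega | (exfalso; omega)

lemma Shat_mid (i : Fin n) (hi : 0 < (i:ℕ)) (hi' : (i:ℕ) < n-1) (k : Fin (n-2)) :
    Shat n i ⟨(k:ℕ)+1, by omega⟩ = sineMat (n-2) ⟨(i:ℕ)-1, by omega⟩ k := by
  have hk : (k:ℕ) < n-2 := k.isLt
  simp only [Shat, Matrix.of_apply]
  rw [if_neg (by omega), if_neg (by omega), dif_pos ⟨hi, hi', by omega, by omega⟩]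
  simp

lemma Shat_mid2 (k : Fin (n-2)) (j : Fin n) (hj : 0 < (j:ℕ)) (hj' : (j:ℕ) < n-1) :
    Shat n ⟨(k:ℕ)+1, by omega⟩ j = sineMat (n-2) k ⟨(j:ℕ)-1, by omega⟩ := by
  have hk : (k:ℕ) < n-2 := k.isLt
  simp only [Shat, Matrix.of_apply]
  rw [if_neg (by omega), if_neg (by omega), dif_pos ⟨by omega, by omega, hj, hj'⟩]
  simp

lemma Umat_notmid (i j : Fin n) (h : ¬ (0 < (i:ℕ) ∧ (i:ℕ) < n-1)) : Umat n i j = 0 := by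
  simp only [Umat, Matrix.of_apply]
  rw [dif_neg h]

lemma Umat_c1 (i j : Fin n) (hi : 0 < (i:ℕ)) (hi' : (i:ℕ) < n-1) (hj : (j:ℕ) = 0) :
    Umat n i j = (sineMat (n - 2)).mulVec (pvec n) ⟨(i:ℕ) - 1, by omega⟩ := by
  simp only [Umat, Matrix.of_apply]
  rw [dif_pos ⟨hi, hi'⟩, if_pos hj]

lemma Umat_c2 (i j : Fin n) (hi : 0 < (i:ℕ)) (hi' : (i:ℕ) < n-1) (hj : (j:ℕ) = n-1) :
    Umat n i j = (sineMat (n - 2)).mulVec ((flipMat (n - 2)).mulVec (pvec n))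
      ⟨(i:ℕ) - 1, by omega⟩ := by
  simp only [Umat, Matrix.of_apply]
  rw [dif_pos ⟨hi, hi'⟩, if_neg (by omega), if_pos hj]

lemma Umat_mid (i j : Fin n) (hj : 0 < (j:ℕ)) (hj' : (j:ℕ) < n-1) : Umat n i j = 0 := by
  simp only [Umat, Matrix.of_apply]
  by_cases h : 0 < (i:ℕ) ∧ (i:ℕ) < n-1
  · rw [dif_pos h, if_neg (by omega), if_neg (by omega)]
  · rw [dif_neg h]

lemma blockT_e1 (x y : Fin (n-2) → ℝ) (M : Matrix (Fin (n-2)) (Fin (n-2)) ℝ)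
    (i j : Fin n) (h : (i:ℕ) = 0) :
    blockT n x y M i j = if (j:ℕ) = 0 then 1 else 0 := by
  simp only [blockT, Matrix.of_apply]
  rw [if_pos h]

lemma blockT_e2 (x y : Fin (n-2) → ℝ) (M : Matrix (Fin (n-2)) (Fin (n-2)) ℝ)
    (i j : Fin n) (h : (i:ℕ) = n-1) :
    blockT n x y M i j = if (j:ℕ) = n-1 then 1 else 0 := by
  simp only [blockT, Matrix.of_apply]
  rw [if_neg (by omega), if_pos h]

lemma blockT_c1 (x y : Fin (n-2) → ℝ) (M : Matrix (Fin (n-2)) (Fin (n-2)) ℝ)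
    (i j : Fin n) (hi : 0 < (i:ℕ)) (hi' : (i:ℕ) < n-1) (hj : (j:ℕ) = 0) :
    blockT n x y M i j = x ⟨(i:ℕ)-1, by omega⟩ := by
  simp only [blockT, Matrix.of_apply]
  rw [if_neg (by omega), if_neg (by omega), dif_pos ⟨hi, hi'⟩, if_pos hj]

lemma blockT_c2 (x y : Fin (n-2) → ℝ) (M : Matrix (Fin (n-2)) (Fin (n-2)) ℝ)
    (i j : Fin n) (hi : 0 < (i:ℕ)) (hi' : (i:ℕ) < n-1) (hj : (j:ℕ) = n-1) :
    blockT n x y M i j = y ⟨(i:ℕ)-1, by omega⟩ := by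
  simp only [blockT, Matrix.of_apply]
  rw [if_neg (by omega), if_neg (by omega), dif_pos ⟨hi, hi'⟩, if_neg (by omega), if_pos hj]

lemma blockT_mid (x y : Fin (n-2) → ℝ) (M : Matrix (Fin (n-2)) (Fin (n-2)) ℝ)
    (i j : Fin n) (hi : 0 < (i:ℕ)) (hi' : (i:ℕ) < n-1) (hj : 0 < (j:ℕ)) (hj' : (j:ℕ) < n-1) :
    blockT n x y M i j = M ⟨(i:ℕ)-1, by omega⟩ ⟨(j:ℕ)-1, by omega⟩ := by
  simp only [blockT, Matrix.of_apply]
  rw [if_neg (by omega), if_neg (by omega), dif_pos ⟨hi, hi'⟩, if_neg (by omega),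
    if_neg (by omega), dif_pos ⟨hj, hj'⟩]

end entries

lemma Umat_sq {n : ℕ} (hn : 3 ≤ n) : Umat n * Umat n = 0 := by
  ext i j
  rw [Matrix.mul_apply, Matrix.zero_apply]
  refine Finset.sum_eq_zero fun k _ => ?_
  by_cases hk : 0 < (k:ℕ) ∧ (k:ℕ) < n - 1
  · rw [Umat_mid hn i k hk.1 hk.2, zero_mul]
  · rw [Umat_notmid hn k j hk, mul_zero]

lemma Shat_sq {n : ℕ} (hn : 3 ≤ n) : Shat n * Shat n = 1 := by
  have hS := sineMat_mul_self (n-2)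
  ext i j
  by_cases hi0 : (i:ℕ) = 0
  · have hz : ∀ k : Fin n, k ≠ (⟨0, by omega⟩ : Fin n) → Shat n i k * Shat n k j = 0 := by
      intro k hk
      rw [Shat_e1 hn i k hi0, if_neg (fun h => hk (Fin.ext (by simpa using h))), zero_mul]
    rw [Matrix.mul_apply, Finset.sum_eq_single (⟨0, by omega⟩ : Fin n)
      (fun k _ hk => hz k hk) (fun h => absurd (Finset.mem_univ _) h)]
    rw [Shat_e1 hn i _ hi0, if_pos rfl, one_mul, Shat_e1 hn _ j rfl, Matrix.one_apply]
    have h4 : i = j ↔ (j:ℕ) = 0 := by rw [Fin.ext_iff]; omega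
    by_cases hj : (j:ℕ) = 0
    · rw [if_pos hj, if_pos (h4.mpr hj)]
    · rw [if_neg hj, if_neg (fun h => hj (h4.mp h))]
  · by_cases hil : (i:ℕ) = n-1
    · have hz : ∀ k : Fin n, k ≠ (⟨n-1, by omega⟩ : Fin n) → Shat n i k * Shat n k j = 0 := by
        intro k hk
        rw [Shat_e2 hn i k hil, if_neg (fun h => hk (Fin.ext (by simpa using h))), zero_mul]
      rw [Matrix.mul_apply, Finset.sum_eq_single (⟨n-1, by omega⟩ : Fin n)
        (fun k _ hk => hz k hk) (fun h => absurd (Finset.mem_univ _) h)]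
      rw [Shat_e2 hn i _ hil, if_pos rfl, one_mul, Shat_e2 hn _ j rfl, Matrix.one_apply]
      have h4 : i = j ↔ (j:ℕ) = n-1 := by rw [Fin.ext_iff]; omega
      by_cases hj : (j:ℕ) = n-1
      · rw [if_pos hj, if_pos (h4.mpr hj)]
      · rw [if_neg hj, if_neg (fun h => hj (h4.mp h))]
    · have hi : 0 < (i:ℕ) ∧ (i:ℕ) < n-1 := ⟨by omega, by omega⟩
      rw [Matrix.mul_apply, sum_split hn (fun k => Shat n i k * Shat n k j), Matrix.one_apply]
      rw [Shat_c1 hn i ⟨0, by omega⟩ rfl, Shat_c2 hn i ⟨n-1, by omega⟩ rfl,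
        if_neg hi0, if_neg hil, zero_mul, zero_mul]
      by_cases hj0 : (j:ℕ) = 0
      · have h3 : ∀ k : Fin (n-2),
            Shat n i ⟨(k:ℕ)+1, by omega⟩ * Shat n ⟨(k:ℕ)+1, by omega⟩ j = 0 := by
          intro k
          rw [Shat_c1 hn _ j hj0, if_neg (by simp), mul_zero]
        rw [Finset.sum_congr rfl fun k _ => h3 k, Finset.sum_const_zero,
          if_neg (by rw [Fin.ext_iff]; omega)]
        ring
      · by_cases hjl : (j:ℕ) = n-1
        · have h3 : ∀ k : Fin (n-2),
              Shat n i ⟨(k:ℕ)+1, by omega⟩ * Shat n ⟨(k:ℕ)+1, by omega⟩ j = 0 := by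
            intro k
            have := k.isLt
            rw [Shat_c2 hn _ j hjl, if_neg (by simp; omega), mul_zero]
          rw [Finset.sum_congr rfl fun k _ => h3 k, Finset.sum_const_zero,
            if_neg (by rw [Fin.ext_iff]; omega)]
          ring
        · have hj : 0 < (j:ℕ) ∧ (j:ℕ) < n-1 := ⟨by omega, by omega⟩
          have h3 : ∀ k : Fin (n-2),
              Shat n i ⟨(k:ℕ)+1, by omega⟩ * Shat n ⟨(k:ℕ)+1, by omega⟩ j
                = sineMat (n-2) ⟨(i:ℕ)-1, by omega⟩ k * sineMat (n-2) k ⟨(j:ℕ)-1, by omega⟩ := by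
            intro k
            rw [Shat_mid hn i hi.1 hi.2 k, Shat_mid2 hn k j hj.1 hj.2]
          rw [Finset.sum_congr rfl fun k _ => h3 k, ← Matrix.mul_apply, hS, Matrix.one_apply]
          have h4 : (⟨(i:ℕ)-1, by omega⟩ : Fin (n-2)) = ⟨(j:ℕ)-1, by omega⟩ ↔ i = j := by
            rw [Fin.ext_iff, Fin.ext_iff]
            simp
            omega
          by_cases hij : i = j
          · rw [if_pos (h4.mpr hij), if_pos hij]; ring
          · rw [if_neg (fun h => hij (h4.mp h)), if_neg hij]; ring

lemma Tfac {n : ℕ} (hn : 3 ≤ n) : Tmat n = Shat n * (1 + Umat n) := by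
  have hS := sineMat_mul_self (n-2)
  have hSS : ∀ v : Fin (n-2) → ℝ,
      (sineMat (n-2)).mulVec ((sineMat (n-2)).mulVec v) = v := by
    intro v
    rw [Matrix.mulVec_mulVec, hS, Matrix.one_mulVec]
  ext i j
  simp only [Tmat]
  by_cases hi0 : (i:ℕ) = 0
  · have hz : ∀ k : Fin n, k ≠ (⟨0, by omega⟩ : Fin n) →
        Shat n i k * (1 + Umat n) k j = 0 := by
      intro k hk
      rw [Shat_e1 hn i k hi0, if_neg (fun h => hk (Fin.ext (by simpa using h))), zero_mul]
    rw [Matrix.mul_apply, Finset.sum_eq_single (⟨0, by omega⟩ : Fin n)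
      (fun k _ hk => hz k hk) (fun h => absurd (Finset.mem_univ _) h)]
    rw [Shat_e1 hn i _ hi0, if_pos rfl, one_mul, Matrix.add_apply, Matrix.one_apply,
      Umat_notmid hn _ j (by simp), add_zero, blockT_e1 hn _ _ _ i j hi0]
    have h4 : (⟨0, by omega⟩ : Fin n) = j ↔ (j:ℕ) = 0 := by rw [Fin.ext_iff]; exact eq_comm
    by_cases hj : (j:ℕ) = 0
    · rw [if_pos hj, if_pos (h4.mpr hj)]
    · rw [if_neg hj, if_neg (fun h => hj (h4.mp h))]
  · by_cases hil : (i:ℕ) = n-1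
    · have hz : ∀ k : Fin n, k ≠ (⟨n-1, by omega⟩ : Fin n) →
          Shat n i k * (1 + Umat n) k j = 0 := by
        intro k hk
        rw [Shat_e2 hn i k hil, if_neg (fun h => hk (Fin.ext (by simpa using h))), zero_mul]
      rw [Matrix.mul_apply, Finset.sum_eq_single (⟨n-1, by omega⟩ : Fin n)
        (fun k _ hk => hz k hk) (fun h => absurd (Finset.mem_univ _) h)]
      rw [Shat_e2 hn i _ hil, if_pos rfl, one_mul, Matrix.add_apply, Matrix.one_apply,
        Umat_notmid hn _ j (fun h => absurd h.2 (lt_irrefl _)), add_zero, blockT_e2 hn _ _ _ i j hil]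
      have h4 : (⟨n-1, by omega⟩ : Fin n) = j ↔ (j:ℕ) = n-1 := by rw [Fin.ext_iff]; exact eq_comm
      by_cases hj : (j:ℕ) = n-1
      · rw [if_pos hj, if_pos (h4.mpr hj)]
      · rw [if_neg hj, if_neg (fun h => hj (h4.mp h))]
    · have hi : 0 < (i:ℕ) ∧ (i:ℕ) < n-1 := ⟨by omega, by omega⟩
      rw [Matrix.mul_apply, sum_split hn (fun k => Shat n i k * (1 + Umat n) k j)]
      rw [Shat_c1 hn i ⟨0, by omega⟩ rfl, if_neg hi0, zero_mul,
        Shat_c2 hn i ⟨n-1, by omega⟩ rfl, if_neg hil, zero_mul, zero_add, add_zero]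
      by_cases hj0 : (j:ℕ) = 0
      · have h3 : ∀ k : Fin (n-2),
            Shat n i ⟨(k:ℕ)+1, by omega⟩ * (1 + Umat n) ⟨(k:ℕ)+1, by omega⟩ j
              = sineMat (n-2) ⟨(i:ℕ)-1, by omega⟩ k
                * ((sineMat (n-2)).mulVec (pvec n)) k := by
          intro k
          have hk := k.isLt
          rw [Shat_mid hn i hi.1 hi.2 k, Matrix.add_apply, Matrix.one_apply,
            if_neg (by rw [Fin.ext_iff]; simp; omega),
            Umat_c1 hn ⟨(k:ℕ)+1, by omega⟩ j (by simp) (by simp; omega) hj0, zero_add]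
          simp
        rw [Finset.sum_congr rfl fun k _ => h3 k]
        have h5 : ∑ k : Fin (n-2), sineMat (n-2) ⟨(i:ℕ)-1, by omega⟩ k
            * ((sineMat (n-2)).mulVec (pvec n)) k
            = (sineMat (n-2)).mulVec ((sineMat (n-2)).mulVec (pvec n)) ⟨(i:ℕ)-1, by omega⟩ := rfl
        rw [h5, hSS, blockT_c1 hn _ _ _ i j hi.1 hi.2 hj0]
      · by_cases hjl : (j:ℕ) = n-1
        · have h3 : ∀ k : Fin (n-2),
              Shat n i ⟨(k:ℕ)+1, by omega⟩ * (1 + Umat n) ⟨(k:ℕ)+1, by omega⟩ j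
                = sineMat (n-2) ⟨(i:ℕ)-1, by omega⟩ k
                  * ((sineMat (n-2)).mulVec ((flipMat (n-2)).mulVec (pvec n))) k := by
            intro k
            have hk := k.isLt
            rw [Shat_mid hn i hi.1 hi.2 k, Matrix.add_apply, Matrix.one_apply,
              if_neg (by rw [Fin.ext_iff]; simp; omega),
              Umat_c2 hn ⟨(k:ℕ)+1, by omega⟩ j (by simp) (by simp; omega) hjl, zero_add]
            simp
          rw [Finset.sum_congr rfl fun k _ => h3 k]
          have h5 : ∑ k : Fin (n-2), sineMat (n-2) ⟨(i:ℕ)-1, by omega⟩ k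
              * ((sineMat (n-2)).mulVec ((flipMat (n-2)).mulVec (pvec n))) k
              = (sineMat (n-2)).mulVec ((sineMat (n-2)).mulVec
                  ((flipMat (n-2)).mulVec (pvec n))) ⟨(i:ℕ)-1, by omega⟩ := rfl
          rw [h5, hSS, blockT_c2 hn _ _ _ i j hi.1 hi.2 hjl]
        · have hj : 0 < (j:ℕ) ∧ (j:ℕ) < n-1 := ⟨by omega, by omega⟩
          have h3 : ∀ k : Fin (n-2),
              Shat n i ⟨(k:ℕ)+1, by omega⟩ * (1 + Umat n) ⟨(k:ℕ)+1, by omega⟩ j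
                = sineMat (n-2) ⟨(i:ℕ)-1, by omega⟩ k
                  * (if k = (⟨(j:ℕ)-1, by omega⟩ : Fin (n-2)) then 1 else 0) := by
            intro k
            rw [Shat_mid hn i hi.1 hi.2 k, Matrix.add_apply, Matrix.one_apply,
              Umat_mid hn _ j hj.1 hj.2, add_zero]
            have hiff : ((⟨(k:ℕ)+1, by omega⟩ : Fin n) = j) ↔ (k = ⟨(j:ℕ)-1, by omega⟩) := by
              have hk := k.isLt
              rw [Fin.ext_iff, Fin.ext_iff]
              simp
              omega
            simp only [hiff]
          rw [Finset.sum_congr rfl fun k _ => h3 k]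
          rw [Finset.sum_eq_single (⟨(j:ℕ)-1, by omega⟩ : Fin (n-2))
            (fun k _ hk => by rw [if_neg hk, mul_zero])
            (fun h => absurd (Finset.mem_univ _) h)]
          rw [if_pos rfl, mul_one, blockT_mid hn _ _ _ i j hi.1 hi.2 hj.1 hj.2]

/-- `U² = 0`, `T_n = Ŝ_n(I + U)`, and `(I - U)Ŝ_n` is the (two-sided)
inverse of `T_n`, i.e. `T_n⁻¹ = (I - U)Ŝ_n`. -/
theorem Tmat_factorization (n : ℕ) (hn : 3 ≤ n) :
    Umat n * Umat n = 0 ∧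
      Tmat n = Shat n * (1 + Umat n) ∧
      Tmat n * ((1 - Umat n) * Shat n) = 1 ∧ ((1 - Umat n) * Shat n) * Tmat n = 1 := by
  have hU := Umat_sq hn
  have hS := Shat_sq hn
  have hT := Tfac hn
  have h1 : (1 + Umat n) * (1 - Umat n) = 1 := by
    have e : (1 + Umat n) * (1 - Umat n) = 1 - Umat n * Umat n := by noncomm_ring
    rw [e, hU, sub_zero]
  have h2 : (1 - Umat n) * (1 + Umat n) = 1 := by
    have e : (1 - Umat n) * (1 + Umat n) = 1 - Umat n * Umat n := by noncomm_ring
    rw [e, hU, sub_zero]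
  refine ⟨hU, hT, ?_, ?_⟩
  · rw [hT, Matrix.mul_assoc, ← Matrix.mul_assoc (1 + Umat n), h1, Matrix.one_mul, hS]
  · rw [hT, Matrix.mul_assoc, ← Matrix.mul_assoc (Shat n), hS, Matrix.one_mul, h2]
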